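/- arXiv:1910.14097 — 4 statements merged into one kernel-verified Lean document; each statement's English description precedes it below -/
import Mathlib

section
/- Let β = ∏_{i≥0}(1 - 3^{-(2i+1)}) and for each m ≥ 0 let β_m = β / ∏_{j=1}^m (3^j - 1) (with the empty product equal to 1). Then ∑_{m=0}^∞ β_m / 3^m = 3/4. -/
/-!
With `q = 1/3` the terms are `β_m / 3^m = β q^(m choose 2) (q²)^m / (q;q)_m`, so the sum is `β`
times Euler's series `F(z) = ∑ q^(m choose 2) z^m / (q;q)_m` at `z = q²`. Comparing coefficients
gives `F(z) = (1 + z) F(qz)`, and iterating this against `F(q^N z) → F(0) = 1` yields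
`F(z) = ∏_{i≥0} (1 + z q^i)`. Hence `F(q²) = (-q;q)_∞ / (1 + q)`. Euler's identity
`(-q;q)_∞ (q;q²)_∞ = 1` (from `(-q;q)_∞ (q;q)_∞ = (q²;q²)_∞` and `(q;q)_∞ = (q;q²)_∞ (q²;q²)_∞`)
says `(-q;q)_∞ = 1/β`, so the sum is `1/(1 + q) = 3/4`.
-/

open Finset Filter Topology

section DistinctOdd

variable {𝕜 : Type*} [NormedField 𝕜]

lemma summable_norm_pow_succ {q : 𝕜} (hq : ‖q‖ < 1) : Summable fun i : ℕ => ‖q ^ (i + 1)‖ := by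
  simpa [norm_pow] using
    (summable_nat_add_iff 1).2 (summable_geometric_of_lt_one (norm_nonneg q) hq)

variable [CompleteSpace 𝕜]

lemma multipliable_one_sub_of_summable {f : ℕ → 𝕜} (hf : Summable fun i => ‖f i‖) :
    Multipliable fun i => 1 - f i := by
  have := multipliable_one_add_of_summable (f := fun i => -f i) (by simpa using hf)
  simpa [sub_eq_add_neg] using this

lemma tprod_one_sub_ne_zero_of_summable {f : ℕ → 𝕜} (hf1 : ∀ i, f i ≠ 1)
    (hf : Summable fun i => ‖f i‖) : ∏' i, (1 - f i) ≠ 0 := by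
  have := tprod_one_add_ne_zero_of_summable (f := fun i => -f i)
    (fun i => by rw [← sub_eq_add_neg, sub_ne_zero]; exact (hf1 i).symm) (by simpa using hf)
  simpa [sub_eq_add_neg] using this

theorem tprod_one_add_pow_succ_mul_tprod_one_sub_pow_odd {q : 𝕜} (hq : ‖q‖ < 1) :
    (∏' i : ℕ, (1 + q ^ (i + 1))) * ∏' i : ℕ, (1 - q ^ (2 * i + 1)) = 1 := by
  have hs := summable_norm_pow_succ hq
  have hodd : Summable fun i : ℕ => ‖q ^ (2 * i + 1)‖ :=
    hs.comp_injective (i := fun i => 2 * i) (fun a b h => by simpa using h)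
  have heven : Summable fun i : ℕ => ‖q ^ (2 * i + 2)‖ :=
    hs.comp_injective (i := fun i => 2 * i + 1) (fun a b h => by simpa using h)
  have hEven_ne : ∏' i : ℕ, (1 - q ^ (2 * i + 2)) ≠ 0 := by
    refine tprod_one_sub_ne_zero_of_summable (fun i h => ?_) heven
    have := congrArg norm h
    rw [norm_pow, norm_one] at this
    exact (pow_lt_one₀ (norm_nonneg q) hq (by omega)).ne this
  have hsq : (∏' i : ℕ, (1 + q ^ (i + 1))) * ∏' i : ℕ, (1 - q ^ (i + 1))
      = ∏' i : ℕ, (1 - q ^ (2 * i + 2)) := by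
    rw [← (multipliable_one_add_of_summable hs).tprod_mul (multipliable_one_sub_of_summable hs)]
    exact tprod_congr fun i => by ring
  have hsplit : (∏' i : ℕ, (1 - q ^ (2 * i + 1))) * ∏' i : ℕ, (1 - q ^ (2 * i + 2))
      = ∏' i : ℕ, (1 - q ^ (i + 1)) :=
    tprod_even_mul_odd (f := fun i => 1 - q ^ (i + 1)) (multipliable_one_sub_of_summable hodd)
      (multipliable_one_sub_of_summable heven)
  apply mul_right_cancel₀ hEven_ne
  rw [mul_assoc, hsplit, hsq, one_mul]

end DistinctOdd

lemma Nat.choose_two_succ (n : ℕ) : (n + 1).choose 2 = n.choose 2 + n := by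
  rw [Nat.choose_succ_succ', Nat.choose_one_right, add_comm]

noncomputable section Euler

def qPochhammer (q : ℝ) (m : ℕ) : ℝ := ∏ j ∈ range m, (1 - q ^ (j + 1))

def eulerCoeff (q z : ℝ) (m : ℕ) : ℝ := q ^ m.choose 2 * z ^ m / qPochhammer q m

def eulerSeries (q z : ℝ) : ℝ := ∑' m, eulerCoeff q z m

variable {q : ℝ}

lemma one_sub_pow_le_qPochhammer (hq0 : 0 ≤ q) (hq1 : q < 1) (m : ℕ) :
    (1 - q) ^ m ≤ qPochhammer q m := by
  rw [qPochhammer, show (1 - q) ^ m = ∏ _j ∈ range m, (1 - q) by simp]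
  refine prod_le_prod (fun _ _ => sub_nonneg.2 hq1.le) fun j _ => ?_
  exact sub_le_sub_left (pow_le_of_le_one hq0 hq1.le j.succ_ne_zero) 1

lemma qPochhammer_pos (hq0 : 0 ≤ q) (hq1 : q < 1) (m : ℕ) : 0 < qPochhammer q m :=
  (pow_pos (by linarith) m).trans_le (one_sub_pow_le_qPochhammer hq0 hq1 m)

lemma abs_eulerCoeff_le (hq0 : 0 ≤ q) (hq1 : q < 1) (z : ℝ) (m : ℕ) :
    |eulerCoeff q z m| ≤ (|z| / (1 - q)) ^ m := by
  have hD := qPochhammer_pos hq0 hq1 m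
  rw [eulerCoeff, abs_div, abs_mul, abs_pow, abs_pow, abs_of_pos hD, abs_of_nonneg hq0, div_pow]
  exact div_le_div₀ (by positivity)
    (mul_le_of_le_one_left (by positivity) (pow_le_one₀ hq0 hq1.le))
    (pow_pos (by linarith) m) (one_sub_pow_le_qPochhammer hq0 hq1 m)

lemma summable_eulerCoeff (hq0 : 0 ≤ q) (hq1 : q < 1) {z : ℝ} (hz : |z| < 1 - q) :
    Summable (eulerCoeff q z) :=
  .of_norm_bounded (summable_geometric_of_lt_one (by positivity)
    ((div_lt_one (by linarith)).2 hz)) (abs_eulerCoeff_le hq0 hq1 z)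

lemma eulerCoeff_succ (hq0 : 0 ≤ q) (hq1 : q < 1) (z : ℝ) (m : ℕ) :
    eulerCoeff q z (m + 1) = eulerCoeff q (q * z) (m + 1) + z * eulerCoeff q (q * z) m := by
  have hD := (qPochhammer_pos hq0 hq1 m).ne'
  have hm : 1 - q ^ (m + 1) ≠ 0 := (sub_pos.2 (pow_lt_one₀ hq0 hq1 m.succ_ne_zero)).ne'
  simp only [eulerCoeff, qPochhammer, prod_range_succ, Nat.choose_two_succ]
  rw [← qPochhammer]
  field_simp
  ring

lemma eulerCoeff_zero (z : ℝ) : eulerCoeff q z 0 = 1 := by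
  simp [eulerCoeff, qPochhammer]

lemma eulerSeries_zero : eulerSeries q 0 = 1 := by
  rw [eulerSeries, tsum_eq_single 0 fun m hm => by simp [eulerCoeff, zero_pow hm],
    eulerCoeff_zero]

lemma eulerSeries_eq_one_add_mul_eulerSeries (hq0 : 0 ≤ q) (hq1 : q < 1) {z : ℝ}
    (hz : |z| < 1 - q) :
    eulerSeries q z = (1 + z) * eulerSeries q (q * z) := by
  have hqz : |q * z| < 1 - q := by
    rw [abs_mul, abs_of_nonneg hq0]
    nlinarith [abs_nonneg z]
  have hs := summable_eulerCoeff hq0 hq1 hqz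
  rw [eulerSeries, eulerSeries, (summable_eulerCoeff hq0 hq1 hz).tsum_eq_zero_add,
    hs.tsum_eq_zero_add, tsum_congr (eulerCoeff_succ hq0 hq1 z),
    ((summable_nat_add_iff 1).2 hs).tsum_add (hs.mul_left z), tsum_mul_left,
    hs.tsum_eq_zero_add, eulerCoeff_zero, eulerCoeff_zero]
  ring

lemma continuousAt_eulerSeries_zero (hq0 : 0 ≤ q) (hq1 : q < 1) :
    ContinuousAt (eulerSeries q) 0 := by
  have hr : 0 < (1 - q) / 2 := by linarith
  refine (continuousOn_tsum (u := fun m => (1 / 2 : ℝ) ^ m)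
    (s := Metric.closedBall 0 ((1 - q) / 2)) (fun m => by unfold eulerCoeff; fun_prop)
    summable_geometric_two fun m z hz => ?_).continuousAt
    (Metric.closedBall_mem_nhds 0 hr)
  refine (abs_eulerCoeff_le hq0 hq1 z m).trans (pow_le_pow_left₀ (by positivity) ?_ m)
  rw [mem_closedBall_zero_iff, Real.norm_eq_abs] at hz
  rw [div_le_iff₀ (by linarith)]
  linarith

theorem tendsto_prod_one_add_mul_pow (hq0 : 0 ≤ q) (hq1 : q < 1) {z : ℝ} (hz : |z| < 1 - q) :
    Tendsto (fun N => ∏ i ∈ range N, (1 + z * q ^ i)) atTop (𝓝 (eulerSeries q z)) := by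
  have hzN (N : ℕ) : |q ^ N * z| < 1 - q := by
    rw [abs_mul, abs_of_nonneg (pow_nonneg hq0 N)]
    exact (mul_le_of_le_one_left (abs_nonneg z) (pow_le_one₀ hq0 hq1.le)).trans_lt hz
  have hfactor (N : ℕ) :
      eulerSeries q z = (∏ i ∈ range N, (1 + z * q ^ i)) * eulerSeries q (q ^ N * z) := by
    induction N with
    | zero => simp
    | succ N ih =>
      rw [ih, eulerSeries_eq_one_add_mul_eulerSeries hq0 hq1 (hzN N), ← mul_assoc q, ← pow_succ',
        prod_range_succ]
      ring
  have htail : Tendsto (fun N => eulerSeries q (q ^ N * z)) atTop (𝓝 1) := by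
    rw [← eulerSeries_zero (q := q)]
    refine (continuousAt_eulerSeries_zero hq0 hq1).tendsto.comp ?_
    simpa using (tendsto_pow_atTop_nhds_zero_of_lt_one hq0 hq1).mul_const z
  have hquot := (tendsto_const_nhds (x := eulerSeries q z)).div htail one_ne_zero
  rw [div_one] at hquot
  refine hquot.congr' ?_
  filter_upwards [htail.eventually_ne one_ne_zero] with N hN
  exact (eq_div_of_mul_eq hN (hfactor N).symm).symm

theorem hasProd_one_add_mul_pow (hq0 : 0 ≤ q) (hq1 : q < 1) {z : ℝ} (hz : |z| < 1 - q) :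
    HasProd (fun i => 1 + z * q ^ i) (eulerSeries q z) := by
  have hm : Multipliable fun i : ℕ => 1 + z * q ^ i :=
    multipliable_one_add_of_summable <| by
      simpa [abs_mul, abs_of_nonneg hq0] using
        (summable_geometric_of_lt_one hq0 hq1).mul_left |z|
  exact (Multipliable.hasProd_iff_tendsto_nat hm).2 (tendsto_prod_one_add_mul_pow hq0 hq1 hz)

lemma prod_pow_succ_sub_one {a : ℝ} (ha : a ≠ 0) (m : ℕ) :
    ∏ j ∈ range m, (a ^ (j + 1) - 1) = a ^ (m + 1).choose 2 * qPochhammer a⁻¹ m := by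
  induction m with
  | zero => simp [qPochhammer]
  | succ m ih =>
    rw [prod_range_succ, ih, qPochhammer, qPochhammer, prod_range_succ, Nat.choose_two_succ (m + 1),
      pow_add, inv_pow]
    field_simp
    ring

lemma div_prod_pow_succ_sub_one_div_pow {a : ℝ} (ha : a ≠ 0) (m : ℕ) :
    1 / (∏ j ∈ range m, (a ^ (j + 1) - 1)) / a ^ m = eulerCoeff a⁻¹ (a⁻¹ ^ 2) m := by
  rw [prod_pow_succ_sub_one ha, eulerCoeff, Nat.choose_two_succ, inv_pow, inv_pow, inv_pow, pow_add]
  field_simp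
  ring

end Euler

open Finset in
/-- With `β = ∏_{i≥0} (1 - 3^{-(2i+1)})` and `β_m = β / ∏_{j=1}^m (3^j - 1)`,
one has `∑_{m=0}^∞ β_m / 3^m = 3/4`. -/
theorem stmt_1 (β : ℝ) (hβ : β = ∏' i : ℕ, (1 - ((3 : ℝ) ^ (2 * i + 1))⁻¹))
    (βm : ℕ → ℝ) (hβm : ∀ m, βm m = β / ∏ j ∈ Finset.range m, ((3 : ℝ) ^ (j + 1) - 1)) :
    (∑' m : ℕ, βm m / 3 ^ m) = 3 / 4 := by
  set q : ℝ := 3⁻¹ with hq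
  have hq0 : 0 ≤ q := by norm_num [hq]
  have hq1 : q < 1 := by norm_num [hq]
  have hβ' : β = ∏' i : ℕ, (1 - q ^ (2 * i + 1)) := by simp only [hβ, hq, inv_pow]
  have hdistinct := tprod_one_add_pow_succ_mul_tprod_one_sub_pow_odd (q := q)
    (by rwa [Real.norm_of_nonneg hq0])
  have hterm (m : ℕ) : βm m / 3 ^ m = β * eulerCoeff q (q ^ 2) m := by
    rw [hβm, ← div_prod_pow_succ_sub_one_div_pow (by norm_num : (3 : ℝ) ≠ 0)]
    ring
  have hE := hasProd_one_add_mul_pow hq0 hq1 (z := q ^ 2) (by norm_num [hq])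
  have hshift : ∏' i : ℕ, (1 + q ^ (i + 1)) = (1 + q) * ∏' i : ℕ, (1 + q ^ 2 * q ^ i) := by
    have hfun : (fun i : ℕ => 1 + q ^ (i + 1 + 1)) = fun i => 1 + q ^ 2 * q ^ i := by
      funext i; ring
    rw [tprod_eq_zero_mul' (f := fun i => 1 + q ^ (i + 1)) (by rw [hfun]; exact hE.multipliable),
      hfun, zero_add, pow_one]
  rw [tsum_congr hterm, tsum_mul_left]
  change β * eulerSeries q (q ^ 2) = 3 / 4
  rw [← hE.tprod_eq]
  rw [hshift, ← hβ', hq] at hdistinct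
  linear_combination (3 / 4 : ℝ) * hdistinct
end

section
/- With β and β_m as above, one has ∑_{m=0}^∞ β_m = 1. -/
/-!
For `q = 1/3` one has `1 / ∏_{j=1}^m (3^j - 1) = q^(m(m+1)/2) / (q; q)_m`, so the claim is Euler's
identity `(∑_m q^(m(m+1)/2) / (q; q)_m) · (q; q²)_∞ = 1`. The sum is `(-q; q)_∞`: let `n → ∞` in
Cauchy's finite q-binomial theorem `∏_{i=1}^n (1 + x q^i) = ∑_m q^(m(m+1)/2) [n choose m]_q x^m`
at `x = 1`, by dominated convergence since `[n choose m]_q ≤ 1 / (q; q)_m`. Finally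
`(-q; q)_n (q; q²)_n = (q; q)_{2n} / (q; q)_n → 1` because `(q; q)_∞ ≠ 0`.
-/

open Finset Filter Topology

noncomputable section

/-- The q-Pochhammer symbol `(q; q)_n = ∏_{j=1}^n (1 - q^j)`. -/
def qPoch (q : ℝ) (n : ℕ) : ℝ := ∏ j ∈ range n, (1 - q ^ (j + 1))

@[simp] lemma qPoch_zero (q : ℝ) : qPoch q 0 = 1 := prod_range_zero _

lemma qPoch_succ (q : ℝ) (n : ℕ) : qPoch q (n + 1) = qPoch q n * (1 - q ^ (n + 1)) :=
  prod_range_succ _ _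

lemma one_sub_pow_succ_pos {q : ℝ} (hq₀ : 0 ≤ q) (hq₁ : q < 1) (j : ℕ) :
    0 < 1 - q ^ (j + 1) :=
  sub_pos.2 (pow_lt_one₀ hq₀ hq₁ j.succ_ne_zero)

lemma qPoch_pos {q : ℝ} (hq₀ : 0 ≤ q) (hq₁ : q < 1) (n : ℕ) : 0 < qPoch q n :=
  prod_pos fun j _ => one_sub_pow_succ_pos hq₀ hq₁ j

lemma qPoch_antitone {q : ℝ} (hq₀ : 0 ≤ q) (hq₁ : q < 1) : Antitone (qPoch q) :=
  antitone_nat_of_succ_le fun n => by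
    rw [qPoch_succ]
    exact mul_le_of_le_one_right (qPoch_pos hq₀ hq₁ n).le (sub_le_self _ (pow_nonneg hq₀ _))

lemma multipliable_one_sub {ι : Type*} {f : ι → ℝ} (hf : Summable f) :
    Multipliable fun i => 1 - f i := by
  simpa only [sub_eq_add_neg] using Real.multipliable_one_add_of_summable hf.neg

lemma summable_pow_succ {q : ℝ} (hq₀ : 0 ≤ q) (hq₁ : q < 1) :
    Summable fun j : ℕ => q ^ (j + 1) :=
  (summable_nat_add_iff 1).2 (summable_geometric_of_lt_one hq₀ hq₁)

lemma tendsto_qPoch {q : ℝ} (hq₀ : 0 ≤ q) (hq₁ : q < 1) :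
    Tendsto (qPoch q) atTop (𝓝 (∏' j : ℕ, (1 - q ^ (j + 1)))) :=
  (multipliable_one_sub (summable_pow_succ hq₀ hq₁)).hasProd.tendsto_prod_nat

lemma tprod_one_sub_pow_succ_pos {q : ℝ} (hq₀ : 0 ≤ q) (hq₁ : q < 1) :
    0 < ∏' j : ℕ, (1 - q ^ (j + 1)) := by
  have hne : ∏' j : ℕ, (1 - q ^ (j + 1)) ≠ 0 := by
    simpa only [← sub_eq_add_neg] using tprod_one_add_ne_zero_of_summable
      (f := fun j : ℕ => -q ^ (j + 1))
      (fun j => by simpa only [← sub_eq_add_neg] using (one_sub_pow_succ_pos hq₀ hq₁ j).ne')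
      (by simpa only [norm_neg, norm_pow, Real.norm_of_nonneg hq₀] using summable_pow_succ hq₀ hq₁)
  exact hne.symm.lt_of_le (ge_of_tendsto' (tendsto_qPoch hq₀ hq₁) fun n => (qPoch_pos hq₀ hq₁ n).le)

lemma tendsto_qPoch_div_qPoch_sub {q : ℝ} (hq₀ : 0 ≤ q) (hq₁ : q < 1) (m : ℕ) :
    Tendsto (fun n => qPoch q n / qPoch q (n - m)) atTop (𝓝 1) := by
  have hL := (tprod_one_sub_pow_succ_pos hq₀ hq₁).ne'
  rw [← div_self hL]
  exact (tendsto_qPoch hq₀ hq₁).div ((tendsto_qPoch hq₀ hq₁).comp (tendsto_sub_atTop_nat m)) hL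

/-- `eulerTerm q m = q^(m(m+1)/2) / (q; q)_m`. -/
def eulerTerm (q : ℝ) (m : ℕ) : ℝ := ∏ j ∈ range m, q ^ (j + 1) / (1 - q ^ (j + 1))

lemma eulerTerm_succ (q : ℝ) (m : ℕ) :
    eulerTerm q (m + 1) = eulerTerm q m * (q ^ (m + 1) / (1 - q ^ (m + 1))) :=
  prod_range_succ _ _

lemma eulerTerm_nonneg {q : ℝ} (hq₀ : 0 ≤ q) (hq₁ : q < 1) (m : ℕ) : 0 ≤ eulerTerm q m :=
  prod_nonneg fun j _ => div_nonneg (pow_nonneg hq₀ _) (one_sub_pow_succ_pos hq₀ hq₁ j).le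

lemma eulerTerm_le {q : ℝ} (hq₀ : 0 ≤ q) (hq₁ : q < 1) (m : ℕ) :
    eulerTerm q m ≤ q ^ m / ∏' j : ℕ, (1 - q ^ (j + 1)) := by
  rw [eulerTerm, prod_div_distrib]
  have hnum : ∏ j ∈ range m, q ^ (j + 1) ≤ q ^ m := by
    simpa only [prod_const, card_range] using prod_le_prod (s := range m)
      (fun j _ => pow_nonneg hq₀ (j + 1)) fun j _ => pow_le_of_le_one hq₀ hq₁.le j.succ_ne_zero
  exact div_le_div₀ (pow_nonneg hq₀ _) hnum (tprod_one_sub_pow_succ_pos hq₀ hq₁)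
    ((qPoch_antitone hq₀ hq₁).le_of_tendsto (tendsto_qPoch hq₀ hq₁) m)

lemma summable_eulerTerm {q : ℝ} (hq₀ : 0 ≤ q) (hq₁ : q < 1) : Summable (eulerTerm q) :=
  .of_nonneg_of_le (eulerTerm_nonneg hq₀ hq₁) (eulerTerm_le hq₀ hq₁)
    ((summable_geometric_of_lt_one hq₀ hq₁).div_const _)

/-- `cauchyCoeff q n m = q^(m(m+1)/2) [n choose m]_q`. -/
def cauchyCoeff (q : ℝ) (n m : ℕ) : ℝ :=
  if m ≤ n then eulerTerm q m * (qPoch q n / qPoch q (n - m)) else 0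

lemma cauchyCoeff_of_lt {q : ℝ} {n m : ℕ} (h : n < m) : cauchyCoeff q n m = 0 :=
  if_neg h.not_ge

lemma cauchyCoeff_zero_right {q : ℝ} (hq₀ : 0 ≤ q) (hq₁ : q < 1) (n : ℕ) :
    cauchyCoeff q n 0 = 1 := by
  simp [cauchyCoeff, eulerTerm, (qPoch_pos hq₀ hq₁ n).ne']

lemma cauchyCoeff_nonneg {q : ℝ} (hq₀ : 0 ≤ q) (hq₁ : q < 1) (n m : ℕ) :
    0 ≤ cauchyCoeff q n m := by
  unfold cauchyCoeff
  split_ifs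
  · exact mul_nonneg (eulerTerm_nonneg hq₀ hq₁ m)
      (div_nonneg (qPoch_pos hq₀ hq₁ n).le (qPoch_pos hq₀ hq₁ _).le)
  · exact le_rfl

lemma cauchyCoeff_le_eulerTerm {q : ℝ} (hq₀ : 0 ≤ q) (hq₁ : q < 1) (n m : ℕ) :
    cauchyCoeff q n m ≤ eulerTerm q m := by
  unfold cauchyCoeff
  split_ifs
  · refine mul_le_of_le_one_right (eulerTerm_nonneg hq₀ hq₁ m) ?_
    exact (div_le_one (qPoch_pos hq₀ hq₁ _)).2 (qPoch_antitone hq₀ hq₁ (n.sub_le m))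
  · exact eulerTerm_nonneg hq₀ hq₁ m

lemma tendsto_cauchyCoeff {q : ℝ} (hq₀ : 0 ≤ q) (hq₁ : q < 1) (m : ℕ) :
    Tendsto (cauchyCoeff q · m) atTop (𝓝 (eulerTerm q m)) := by
  have h := (tendsto_qPoch_div_qPoch_sub hq₀ hq₁ m).const_mul (eulerTerm q m)
  rw [mul_one] at h
  exact h.congr' (eventually_ge_atTop m |>.mono fun n hn => (if_pos hn).symm)

lemma cauchyCoeff_succ_succ {q : ℝ} (hq₀ : 0 ≤ q) (hq₁ : q < 1) (n m : ℕ) :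
    cauchyCoeff q (n + 1) (m + 1) = cauchyCoeff q n (m + 1) + q ^ (n + 1) * cauchyCoeff q n m := by
  have hQ := qPoch_pos hq₀ hq₁
  have hf := one_sub_pow_succ_pos hq₀ hq₁
  rcases lt_trichotomy m n with hmn | rfl | hnm
  · obtain ⟨k, rfl⟩ := Nat.exists_eq_add_of_lt hmn
    simp only [cauchyCoeff, if_pos (by omega : m + 1 ≤ m + k + 1 + 1),
      if_pos (by omega : m + 1 ≤ m + k + 1), if_pos (by omega : m ≤ m + k + 1),
      show m + k + 1 + 1 - (m + 1) = k + 1 by omega, show m + k + 1 - (m + 1) = k by omega,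
      show m + k + 1 - m = k + 1 by omega, eulerTerm_succ, qPoch_succ q (m + k + 1), qPoch_succ q k]
    field_simp [(hQ k).ne', (hQ (m + k + 1)).ne', (hf m).ne', (hf k).ne']
    ring
  · rw [cauchyCoeff_of_lt (Nat.lt_succ_self m)]
    simp only [cauchyCoeff, le_refl, if_true, Nat.sub_self, qPoch_zero, div_one,
      eulerTerm_succ, qPoch_succ]
    field_simp [(hf m).ne']
    ring
  · simp [cauchyCoeff_of_lt, hnm, Nat.lt_succ_of_lt hnm]

theorem prod_one_add_mul_pow_succ {q : ℝ} (hq₀ : 0 ≤ q) (hq₁ : q < 1) (x : ℝ) (n : ℕ) :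
    ∏ i ∈ range n, (1 + x * q ^ (i + 1)) = ∑ m ∈ range (n + 1), cauchyCoeff q n m * x ^ m := by
  induction n with
  | zero => simp [cauchyCoeff_zero_right hq₀ hq₁]
  | succ n ih =>
    have hshift := sum_range_succ' (fun m => cauchyCoeff q n m * x ^ m) (n + 1)
    rw [sum_range_succ, cauchyCoeff_of_lt (Nat.lt_succ_self n), zero_mul, add_zero,
      cauchyCoeff_zero_right hq₀ hq₁] at hshift
    have hmul : ∑ m ∈ range (n + 1), q ^ (n + 1) * cauchyCoeff q n m * x ^ (m + 1) =
        x * q ^ (n + 1) * ∑ m ∈ range (n + 1), cauchyCoeff q n m * x ^ m := by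
      rw [mul_sum]
      exact sum_congr rfl fun m _ => by ring
    rw [prod_range_succ, ih, sum_range_succ' (fun m => cauchyCoeff q (n + 1) m * x ^ m),
      cauchyCoeff_zero_right hq₀ hq₁]
    simp only [cauchyCoeff_succ_succ hq₀ hq₁, add_mul, sum_add_distrib]
    linear_combination hshift - hmul

theorem tendsto_prod_one_add_pow_succ {q : ℝ} (hq₀ : 0 ≤ q) (hq₁ : q < 1) :
    Tendsto (fun n => ∏ i ∈ range n, (1 + q ^ (i + 1))) atTop (𝓝 (∑' m, eulerTerm q m)) := by
  have h := tendsto_tsum_of_dominated_convergence (summable_eulerTerm hq₀ hq₁)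
    (tendsto_cauchyCoeff hq₀ hq₁) (.of_forall fun n m => by
      rw [Real.norm_of_nonneg (cauchyCoeff_nonneg hq₀ hq₁ n m)]
      exact cauchyCoeff_le_eulerTerm hq₀ hq₁ n m)
  refine h.congr fun n => ?_
  rw [tsum_eq_sum (s := range (n + 1)) fun m hm => cauchyCoeff_of_lt (by simpa using hm)]
  simpa using (prod_one_add_mul_pow_succ hq₀ hq₁ 1 n).symm

lemma prod_one_add_pow_succ_mul_prod_one_sub_pow_odd (q : ℝ) (n : ℕ) :
    (∏ i ∈ range n, (1 + q ^ (i + 1))) * (∏ i ∈ range n, (1 - q ^ (2 * i + 1))) * qPoch q n =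
      qPoch q (2 * n) := by
  induction n with
  | zero => simp
  | succ n ih =>
    rw [show 2 * (n + 1) = 2 * n + 1 + 1 by ring, qPoch_succ q (2 * n + 1), qPoch_succ q (2 * n),
      ← ih, prod_range_succ, prod_range_succ, qPoch_succ]
    ring

theorem tsum_eulerTerm_mul_tprod_one_sub_pow_odd {q : ℝ} (hq₀ : 0 ≤ q) (hq₁ : q < 1) :
    (∑' m, eulerTerm q m) * ∏' i : ℕ, (1 - q ^ (2 * i + 1)) = 1 := by
  have hodd : Summable fun i : ℕ => q ^ (2 * i + 1) :=
    .of_nonneg_of_le (fun i => pow_nonneg hq₀ _)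
      (fun i => pow_le_pow_of_le_one hq₀ hq₁.le (by omega))
      (summable_geometric_of_lt_one hq₀ hq₁)
  have hprod := (tendsto_prod_one_add_pow_succ hq₀ hq₁).mul
    (multipliable_one_sub hodd).hasProd.tendsto_prod_nat
  have hL := (tprod_one_sub_pow_succ_pos hq₀ hq₁).ne'
  have hratio : Tendsto (fun n => qPoch q (2 * n) / qPoch q n) atTop (𝓝 1) := by
    rw [← div_self hL]
    exact ((tendsto_qPoch hq₀ hq₁).comp (tendsto_id.const_mul_atTop' two_pos)).div
      (tendsto_qPoch hq₀ hq₁) hL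
  refine tendsto_nhds_unique hprod (hratio.congr fun n => ?_)
  rw [← prod_one_add_pow_succ_mul_prod_one_sub_pow_odd,
    mul_div_cancel_right₀ _ (qPoch_pos hq₀ hq₁ n).ne']

end

/-- With `β = ∏_{i≥0} (1 - 3^{-(2i+1)})` and `β_m = β / ∏_{j=1}^m (3^j - 1)`,
one has `∑_{m=0}^∞ β_m = 1`. -/
theorem stmt_2 (β : ℝ) (hβ : β = ∏' i : ℕ, (1 - ((3 : ℝ) ^ (2 * i + 1))⁻¹))
    (βm : ℕ → ℝ) (hβm : ∀ m, βm m = β / ∏ j ∈ Finset.range m, ((3 : ℝ) ^ (j + 1) - 1)) :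
    (∑' m : ℕ, βm m) = 1 := by
  have hβm' : ∀ m, βm m = β * eulerTerm 3⁻¹ m := fun m => by
    rw [hβm, eulerTerm, div_eq_mul_inv, ← prod_inv_distrib]
    congr 1
    refine prod_congr rfl fun j _ => ?_
    have : (3 : ℝ) ^ (j + 1) - 1 ≠ 0 := sub_ne_zero.2 (one_lt_pow₀ (by norm_num) j.succ_ne_zero).ne'
    rw [inv_pow]
    field_simp
  rw [tsum_congr hβm', tsum_mul_left, mul_comm, hβ]
  simpa only [inv_pow] using
    tsum_eulerTerm_mul_tprod_one_sub_pow_odd (q := 3⁻¹) (by norm_num) (by norm_num)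
end

section
/- Let K = ℚ(ζ_3), λ = 1 − ζ_3, and let π ∈ ℤ[ζ_3] be a prime with π ≡ 1 mod λ² but π ≢ 1 mod λ³. Then ζ_3 is not a cube in the completion K_π. -/
/-
If `x ^ 3 = ζ` in `K_π`, then `x` is a `π`-adic integer, and its reduction is a cube root of
`ζ mod π ≠ 1` in the finite field `𝓞 K ⧸ (π)`, hence an element of order `9`; so
`N(π) = ± #(𝓞 K ⧸ (π)) ≡ ± 1 mod 9`. On the other hand, let `σ` be the automorphism with
`σ ζ = ζ²`, so that `σ λ = -ζ² λ` and `σ` acts trivially modulo `λ`. Writing `π = 1 + λ² t`, one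
gets `N(π) = π σ(π) ≡ 1 + 2 λ² t mod λ³`. As `9 = ζ λ⁴` and `λ² ∣ 3`, the sign must be `+` and
`λ ∣ t`, i.e. `π ≡ 1 mod λ³`.
-/

open NumberField IsDedekindDomain

theorem Valuation.map_pow_sub_pow_le {A Γ₀ : Type*} [CommRing A]
    [LinearOrderedCommMonoidWithZero Γ₀] (v : Valuation A Γ₀) {a b : A} (ha : v a ≤ 1)
    (hb : v b ≤ 1) (n : ℕ) : v (a ^ n - b ^ n) ≤ v (a - b) := by
  rw [← geom_sum₂_mul, map_mul]
  refine mul_le_of_le_one_left' (v.map_sum_le fun i _ => ?_)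
  rw [map_mul, map_pow, map_pow]
  exact mul_le_one' (pow_le_one' ha _) (pow_le_one' hb _)

namespace IsDedekindDomain.HeightOneSpectrum

variable {R : Type*} [CommRing R] [IsDedekindDomain R] {K : Type*} [Field K] [Algebra R K]
  [IsFractionRing R K] (v : HeightOneSpectrum R)

-- `valuedAdicCompletion_eq_valuation'` with the coercion written as `algebraMap`, for rewriting
theorem valued_algebraMap_adicCompletion (k : K) :
    Valued.v (algebraMap K (v.adicCompletion K) k) = v.valuation K k :=
  valuedAdicCompletion_eq_valuation' v k

theorem valued_algebraMap_adicCompletion_le_one (r : R) :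
    Valued.v (algebraMap R (v.adicCompletion K) r) ≤ 1 := by
  rw [IsScalarTower.algebraMap_apply R K, valued_algebraMap_adicCompletion]
  exact v.valuation_le_one r

theorem exists_valued_sub_algebraMap_lt_one {x : v.adicCompletion K} (hx : Valued.v x ≤ 1) :
    ∃ r : R, Valued.v (x - algebraMap R (v.adicCompletion K) r) < 1 := by
  obtain ⟨_, hax : Valued.v (_ - x) < 1, a, rfl⟩ := mem_closure_iff_nhds.mp
    (v.denseRange_algebraMap K x) {y | Valued.v (y - x) < 1}
    (Valued.mem_nhds.mpr ⟨1, fun y hy => by simpa using hy⟩)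
  have ha : v.valuation K a ≤ 1 := by
    rw [← valued_algebraMap_adicCompletion, ← sub_add_cancel (algebraMap K _ a) x]
    exact Valued.v.map_add_le hax.le hx
  obtain ⟨r, hr⟩ := v.exists_valuation_sub_lt_of_integer ha 1
  refine ⟨r, ?_⟩
  have hra : Valued.v (algebraMap R (v.adicCompletion K) r - algebraMap K _ a) < 1 := by
    rw [IsScalarTower.algebraMap_apply R K, ← map_sub, valued_algebraMap_adicCompletion]
    simpa using hr
  rw [← neg_sub, Valuation.map_neg, ← sub_add_sub_cancel _ (algebraMap K _ a)]
  exact Valued.v.map_add_lt hra hax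

theorem exists_pow_sub_mem_asIdeal_of_pow_eq {n : ℕ} (hn : n ≠ 0) {x : v.adicCompletion K}
    {z : R} (hx : x ^ n = algebraMap R (v.adicCompletion K) z) :
    ∃ b : R, b ^ n - z ∈ v.asIdeal := by
  have hxle : Valued.v x ≤ 1 := by
    rw [← pow_le_one_iff hn, ← map_pow, hx]
    exact v.valued_algebraMap_adicCompletion_le_one z
  obtain ⟨b, hb⟩ := v.exists_valued_sub_algebraMap_lt_one hxle
  refine ⟨b, (v.valuation_lt_one_iff_mem (K := K) _).mp ?_⟩
  rw [← valued_algebraMap_adicCompletion, ← IsScalarTower.algebraMap_apply, map_sub, map_pow, ← hx,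
    ← neg_sub, Valuation.map_neg]
  exact (Valued.v.map_pow_sub_pow_le hxle (v.valued_algebraMap_adicCompletion_le_one b) n).trans_lt
    hb

end IsDedekindDomain.HeightOneSpectrum

theorem orderOf_dvd_natCard_sub_one {G₀ : Type*} [GroupWithZero G₀] [Finite G₀] {a : G₀}
    (ha : a ≠ 0) : orderOf a ∣ Nat.card G₀ - 1 := by
  have := Fintype.ofFinite G₀
  rw [Nat.card_eq_fintype_card]
  exact orderOf_dvd_of_pow_eq_one (FiniteField.pow_card_sub_one_eq_one a ha)

theorem natCard_modEq_one_nine_of_pow_three_eq {F : Type*} [Field F] [Finite F] {y ω : F}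
    (hω : ω ^ 3 = 1) (hω1 : ω ≠ 1) (hy : y ^ 3 = ω) : Nat.card F ≡ 1 [MOD 9] := by
  have hy9 : orderOf y = 3 ^ (1 + 1) := by
    refine orderOf_eq_prime_pow ?_ ?_
    · rwa [pow_one, hy]
    · rw [pow_succ, pow_mul, pow_one, hy, hω]
  refine ((Nat.modEq_iff_dvd' Nat.card_pos).mpr ?_).symm
  rw [← show 3 ^ (1 + 1) = 9 from rfl, ← hy9]
  refine orderOf_dvd_natCard_sub_one fun h0 => ?_
  rw [h0, zero_pow three_ne_zero] at hy
  rw [← hy, zero_pow three_ne_zero] at hω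
  exact zero_ne_one hω

theorem sub_dvd_map_sub_of_adjoin_eq_top {R A F : Type*} [CommRing R] [CommRing A] [Algebra R A]
    [FunLike F A A] [AlgHomClass F R A A] {z : A} (hz : Algebra.adjoin R {z} = ⊤) (σ : F)
    (t : A) : σ z - z ∣ σ t - t := by
  let q := Ideal.Quotient.mkₐ R (Ideal.span {σ z - z})
  have hq : q.comp (AlgHomClass.toAlgHom σ) = q := AlgHom.ext_of_adjoin_eq_top hz fun x hx => by
    rw [Set.mem_singleton_iff.mp hx]
    exact Ideal.Quotient.eq.mpr (Ideal.mem_span_singleton_self _)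
  rw [← Ideal.mem_span_singleton]
  exact Ideal.Quotient.eq.mp (AlgHom.congr_fun hq t)

section EisensteinArithmetic

variable {A F : Type*} [CommRing A] [FunLike F A A] [RingHomClass F A A] {z : A}

theorem one_sub_pow_three_dvd_mul_map_sub_one_sub (hz : z ^ 2 + z + 1 = 0) {σ : F}
    (hσz : σ z = z ^ 2) (hσ : ∀ t, 1 - z ∣ σ t - t) {π t : A} (ht : π - 1 = (1 - z) ^ 2 * t) :
    (1 - z) ^ 3 ∣ π * σ π - 1 - 2 * (π - 1) := by
  obtain ⟨s, hs⟩ := hσ t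
  have hσπ : σ π = 1 + z * (1 - z) ^ 2 * σ t := by
    rw [eq_add_of_sub_eq ht, map_add, map_one, map_mul, map_pow, map_sub, map_one, hσz]
    linear_combination (1 - z) ^ 2 * σ t * hz
  exact ⟨z * s - t + z * (1 - z) * t * σ t, by
    rw [hσπ, eq_add_of_sub_eq ht]; linear_combination (1 - z) ^ 2 * z * hs⟩

theorem one_sub_pow_three_dvd_sub_one_of_nine_dvd (hz : z ^ 2 + z + 1 = 0) {σ : F}
    (hσz : σ z = z ^ 2) (hσ : ∀ t, 1 - z ∣ σ t - t) {π : A} (h1 : (1 - z) ^ 2 ∣ π - 1)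
    (h9 : 9 ∣ π * σ π - 1 ∨ 9 ∣ π * σ π + 1) : (1 - z) ^ 3 ∣ π - 1 := by
  obtain ⟨t, ht⟩ := h1
  have hd := one_sub_pow_three_dvd_mul_map_sub_one_sub hz hσz hσ ht
  have h3 : (1 - z) ^ 2 ∣ 3 := ⟨-z ^ 2, by linear_combination (z ^ 2 - 3 * z + 3) * hz⟩
  have h9' : (1 - z) ^ 3 ∣ 9 :=
    ⟨z * (1 - z), by linear_combination (-z ^ 3 + 5 * z ^ 2 - 10 * z + 9) * hz⟩
  have h3π : (1 - z) ^ 3 ∣ 3 * (π - 1) := by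
    rw [pow_succ]
    exact mul_dvd_mul h3 ⟨(1 - z) * t, by rw [ht]; ring⟩
  rcases h9 with h | h
  · have h2π : (1 - z) ^ 3 ∣ 2 * (π - 1) := by
      simpa using dvd_sub (h9'.trans h) hd
    simpa [show 3 * (π - 1) - 2 * (π - 1) = π - 1 by ring] using dvd_sub h3π h2π
  · have h2 : (1 - z) ^ 2 ∣ 2 := by
      have hsq : (1 - z) ^ 2 ∣ (1 - z) ^ 3 := pow_dvd_pow _ (by norm_num)
      have := dvd_sub (dvd_sub (hsq.trans (h9'.trans h)) (hsq.trans hd))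
        ((Dvd.intro t ht.symm).mul_left 2)
      rwa [show π * σ π + 1 - (π * σ π - 1 - 2 * (π - 1)) - 2 * (π - 1) = 2 by ring] at this
    have hunit : IsUnit (1 - z) := by
      refine (isUnit_pow_iff two_ne_zero).mp (isUnit_of_dvd_one ?_)
      simpa [show (3 : A) - 2 = 1 by norm_num] using dvd_sub h3 h2
    exact (hunit.pow 3).dvd

end EisensteinArithmetic

theorem Algebra.algebraMap_norm_eq_mul_of_finrank_eq_two {F L : Type*} [Field F] [Field L]
    [Algebra F L] [IsGalois F L] (h2 : Module.finrank F L = 2) {τ : Gal(L/F)} (hτ : τ ≠ 1)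
    (x : L) : algebraMap F L (Algebra.norm F x) = x * τ x := by
  classical
  have : FiniteDimensional F L := Module.finite_of_finrank_eq_succ h2
  have huniv : ({1, τ} : Finset Gal(L/F)) = Finset.univ := by
    refine Finset.eq_univ_of_card _ ?_
    rw [Finset.card_pair hτ.symm, ← Nat.card_eq_fintype_card, IsGalois.card_aut_eq_finrank, h2]
  rw [Algebra.norm_eq_prod_automorphisms, ← huniv, Finset.prod_pair hτ.symm]
  rfl

namespace IsPrimitiveRoot

open IsCyclotomicExtension.Rat

variable {K : Type*} [Field K] [NumberField K] [IsCyclotomicExtension {3} ℚ K] {ζ : K}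

theorem exists_algEquiv_toInteger_eq_sq_and_algebraMap_norm_eq_mul (hζ : IsPrimitiveRoot ζ 3) :
    ∃ σ : 𝓞 K ≃ₐ[ℤ] 𝓞 K, σ hζ.toInteger = hζ.toInteger ^ 2 ∧
      ∀ x, algebraMap ℤ (𝓞 K) (Algebra.norm ℤ x) = x * σ x := by
  have : IsGalois ℚ K := IsCyclotomicExtension.isGalois {3} ℚ K
  set τ := (galEquivZMod 3 K).symm (-1)
  have hτζ : τ ζ = ζ ^ 2 := by
    rw [galEquivZMod_apply_of_pow_eq 3 K τ hζ.pow_eq_one, MulEquiv.apply_symm_apply]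
    rfl
  have hτ : τ ≠ 1 := fun h => hζ.ne_one (by norm_num) <| by
    have hζζ : ζ ^ 2 = ζ := by rw [← hτζ, h, AlgEquiv.one_apply]
    linear_combination -(ζ + 1) * hζζ + hζ.pow_eq_one
  have h2 : Module.finrank ℚ K = 2 := by
    rw [IsCyclotomicExtension.Rat.finrank 3 K]; rfl
  refine ⟨galRestrict ℤ ℚ K (𝓞 K) τ, RingOfIntegers.coe_injective ?_,
    fun x => RingOfIntegers.coe_injective ?_⟩
  · rw [algebraMap_galRestrict_apply]
    exact hτζ
  · rw [map_mul, algebraMap_galRestrict_apply, ← IsScalarTower.algebraMap_apply,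
      IsScalarTower.algebraMap_apply ℤ ℚ K,
      ← Algebra.algebraMap_norm_eq_mul_of_finrank_eq_two h2 hτ]
    exact congrArg _ (Algebra.coe_norm_int x)

theorem one_sub_toInteger_pow_three_dvd_sub_one (hζ : IsPrimitiveRoot ζ 3) {π : 𝓞 K}
    (h1 : (1 - hζ.toInteger) ^ 2 ∣ π - 1) (h9 : Nat.card (𝓞 K ⧸ Ideal.span {π}) ≡ 1 [MOD 9]) :
    (1 - hζ.toInteger) ^ 3 ∣ π - 1 := by
  obtain ⟨σ, hση, hnorm⟩ := hζ.exists_algEquiv_toInteger_eq_sq_and_algebraMap_norm_eq_mul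
  have hσ (t : 𝓞 K) : 1 - hζ.toInteger ∣ σ t - t :=
    (Dvd.intro (-hζ.toInteger) (by rw [hση]; ring)).trans
      (sub_dvd_map_sub_of_adjoin_eq_top (adjoin_singleton_eq_top hζ) σ t)
  refine one_sub_pow_three_dvd_sub_one_of_nine_dvd (Three.eta_sq_add_eta_add_one hζ) hση hσ h1 ?_
  rw [← Submodule.cardQuot_apply, ← Ideal.absNorm_apply, Ideal.absNorm_span_singleton,
    Nat.modEq_iff_dvd] at h9
  rw [← hnorm]
  -- the cardinality of the residue field only determines `N(π)` up to sign
  have : (9 : ℤ) ∣ Algebra.norm ℤ π - 1 ∨ (9 : ℤ) ∣ Algebra.norm ℤ π + 1 := by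
    rcases Int.natAbs_eq (Algebra.norm ℤ π) with h | h <;> omega
  exact this.imp (fun h => by simpa using map_dvd (algebraMap ℤ (𝓞 K)) h)
    (fun h => by simpa using map_dvd (algebraMap ℤ (𝓞 K)) h)

end IsPrimitiveRoot

theorem stmt_11_general (K : Type*) [Field K] [NumberField K] [IsCyclotomicExtension {3} ℚ K]
    (ζ : K) (hζ : IsPrimitiveRoot ζ 3)
    (z : 𝓞 K) (hz : algebraMap (𝓞 K) K z = ζ)
    (π : 𝓞 K)
    (h1 : (1 - z) ^ 2 ∣ π - 1) (h2 : ¬ (1 - z) ^ 3 ∣ π - 1)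
    (v : HeightOneSpectrum (𝓞 K)) (hv : v.asIdeal = Ideal.span {π}) :
    ¬ ∃ x : HeightOneSpectrum.adicCompletion K v,
        x ^ 3 = algebraMap K (HeightOneSpectrum.adicCompletion K v) ζ := by
  rintro ⟨x, hx⟩
  obtain rfl : z = hζ.toInteger := RingOfIntegers.ext hz
  rw [← hz, ← IsScalarTower.algebraMap_apply] at hx
  obtain ⟨b, hb⟩ := v.exists_pow_sub_mem_asIdeal_of_pow_eq three_ne_zero hx
  let _ := Ideal.Quotient.field v.asIdeal
  have := Ideal.finiteQuotientOfFreeOfNeBot v.asIdeal v.ne_bot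
  have hη1 : Ideal.Quotient.mk v.asIdeal hζ.toInteger ≠ 1 := fun h => by
    obtain ⟨c, hc⟩ := h1
    have hπ : Ideal.Quotient.mk v.asIdeal π = 0 :=
      Ideal.Quotient.eq_zero_iff_mem.mpr (hv ▸ Ideal.mem_span_singleton_self π)
    simpa [h, hπ] using congrArg (Ideal.Quotient.mk v.asIdeal) hc
  refine h2 (hζ.one_sub_toInteger_pow_three_dvd_sub_one h1 (hv ▸ ?_))
  refine natCard_modEq_one_nine_of_pow_three_eq (y := Ideal.Quotient.mk _ b) ?_ hη1 ?_
  · rw [← map_pow, hζ.toInteger_cube_eq_one, map_one]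
  · rw [← map_pow]
    exact Ideal.Quotient.eq.mpr hb

/-- Let `K = ℚ(ζ₃)`, `λ = 1 - ζ₃`, and let `π` be a prime of `ℤ[ζ₃]` with
`π ≡ 1 (mod λ²)` but `π ≢ 1 (mod λ³)`.  Then `ζ₃` is not a cube in the completion `K_π`. -/
theorem stmt_11 (K : Type*) [Field K] [NumberField K] [IsCyclotomicExtension {3} ℚ K]
    (ζ : K) (hζ : IsPrimitiveRoot ζ 3)
    (z : 𝓞 K) (hz : algebraMap (𝓞 K) K z = ζ)
    (π : 𝓞 K) (hπ : Prime π)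
    (h1 : (1 - z) ^ 2 ∣ π - 1) (h2 : ¬ (1 - z) ^ 3 ∣ π - 1)
    (v : HeightOneSpectrum (𝓞 K)) (hv : v.asIdeal = Ideal.span {π}) :
    ¬ ∃ x : HeightOneSpectrum.adicCompletion K v,
        x ^ 3 = algebraMap K (HeightOneSpectrum.adicCompletion K v) ζ :=
  stmt_11_general K ζ hζ z hz π h1 h2 v hv
end

section
/- Let q ≥ 2 be an integer. Then the partial sums ∑_{m=0}^{n} 1/∏_{j=1}^{m}(q^j − 1) converge as n → ∞, and ∏_{i≥0}(1 − q^{−(2i+1)}) · ∑_{m=0}^{∞} 1/∏_{j=1}^{m}(q^j − 1) = 1. -/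
open Finset Filter

namespace Stmt19Aux

/-- Weierstrass-type bound: `∏ (1 - aᵢ) ≥ 1 - ∑ aᵢ`. -/
lemma one_sub_sum_le_prod {a : ℕ → ℝ} (h0 : ∀ i, 0 ≤ a i) (h1 : ∀ i, a i ≤ 1) (n : ℕ) :
    1 - ∑ i ∈ range n, a i ≤ ∏ i ∈ range n, (1 - a i) := by
  induction n with
  | zero => simp
  | succ n ih =>
    rw [Finset.sum_range_succ, Finset.prod_range_succ]
    have hs : 0 ≤ ∑ i ∈ range n, a i := Finset.sum_nonneg fun i _ => h0 i
    nlinarith [h0 n, h1 n, mul_le_mul_of_nonneg_right ih (by linarith [h1 n] : (0:ℝ) ≤ 1 - a n),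
      mul_nonneg hs (h0 n)]

lemma abs_log_le {y : ℝ} (h : 1/2 ≤ y) : |Real.log y| ≤ 2 * |y - 1| := by
  have hy : (0:ℝ) < y := by linarith
  rcases le_total 1 y with h1 | h1
  · rw [abs_of_nonneg (Real.log_nonneg h1), abs_of_nonneg (by linarith)]
    have := Real.log_le_sub_one_of_pos hy
    linarith
  · rw [abs_of_nonpos (Real.log_nonpos hy.le h1), abs_of_nonpos (by linarith)]
    have hinv : Real.log y⁻¹ ≤ y⁻¹ - 1 := Real.log_le_sub_one_of_pos (by positivity)
    rw [Real.log_inv] at hinv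
    have h2 : y⁻¹ - 1 = (1 - y)/y := by field_simp
    have h3 : (1 - y)/y ≤ 2*(1-y) := by
      rw [div_le_iff₀ hy]; nlinarith
    linarith

lemma multipliable_of_log {f : ℕ → ℝ} (hpos : ∀ n, 0 < f n)
    (h : Summable fun n => Real.log (f n)) : Multipliable f := by
  refine ⟨Real.exp (∑' n, Real.log (f n)), ?_⟩
  have := h.hasSum.rexp
  have he : (Real.exp ∘ fun n => Real.log (f n)) = f := by
    funext n; exact Real.exp_log (hpos n)
  rwa [he] at this

lemma mult_one_add_of {a : ℕ → ℝ} (ha : ∀ n, |a n| ≤ 1/2) (hs : Summable a) :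
    Multipliable (fun n => 1 + a n) := by
  have hpos : ∀ n, 0 < 1 + a n := fun n => by
    have := abs_le.mp (ha n); linarith [this.1]
  refine multipliable_of_log hpos ?_
  refine Summable.of_abs (Summable.of_nonneg_of_le (fun n => abs_nonneg _)
    (fun n => ?_) ((hs.abs).mul_left 2))
  have h12 : (1:ℝ)/2 ≤ 1 + a n := by have := abs_le.mp (ha n); linarith [this.1]
  calc |Real.log (1 + a n)| ≤ 2 * |1 + a n - 1| := abs_log_le h12
    _ = 2 * |a n| := by ring_nf

/-- the terms of the q-exponential at `x` -/
noncomputable def gg (t x : ℝ) (m : ℕ) : ℝ := ∏ j ∈ range m, (x * t^j / (1 - t^(j+1)))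

lemma gg_zero (t x : ℝ) : gg t x 0 = 1 := by simp [gg]

section T

variable {t : ℝ} (h0 : 0 < t) (h2 : t ≤ 1/2)

include h0 h2

lemma pow_le (k : ℕ) : t^(k+1) ≤ 1/2 := by
  calc t^(k+1) ≤ t^1 := pow_le_pow_of_le_one h0.le (by linarith) (Nat.succ_le_succ (Nat.zero_le k))
    _ = t := pow_one t
    _ ≤ 1/2 := h2

lemma factor_pos (k : ℕ) : (0:ℝ) < 1 - t^(k+1) := by
  have := pow_le h0 h2 k; linarith

lemma sum_pow_le (n : ℕ) : ∑ j ∈ range n, t^(j+2) ≤ 1/2 := by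
  have h1 : ∑ j ∈ range n, t^(j+2) = t^2 * ∑ j ∈ range n, t^j := by
    rw [Finset.mul_sum]
    exact Finset.sum_congr rfl fun j _ => by ring
  have h3 : ∑ j ∈ range n, t^j ≤ 2 := by
    have ht1 : t ≠ 1 := by linarith
    rw [geom_sum_eq ht1]
    have hp : (0:ℝ) ≤ t^n := by positivity
    rw [div_le_iff_of_neg (by linarith : t - 1 < 0)]
    nlinarith
  have hnn : (0:ℝ) ≤ ∑ j ∈ range n, t^j :=
    Finset.sum_nonneg fun j _ => by positivity
  rw [h1]
  nlinarith [sq_nonneg t]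

lemma Pd_lb (m : ℕ) : (1:ℝ)/4 ≤ ∏ j ∈ range m, (1 - t^(j+1)) := by
  cases m with
  | zero => norm_num
  | succ n =>
    rw [Finset.prod_range_succ']
    have hA : 1 - ∑ j ∈ range n, t^(j+2) ≤ ∏ j ∈ range n, (1 - t^(j+2)) :=
      one_sub_sum_le_prod (fun i => by positivity)
        (fun i => by have := pow_le h0 h2 (i+1); rw [show i+1+1 = i+2 from rfl] at this; linarith) n
    have hS := sum_pow_le h0 h2 n
    have hhalf : (1:ℝ)/2 ≤ ∏ j ∈ range n, (1 - t^(j+2)) := by linarith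
    have hpos : (0:ℝ) < 1 - t^(0+1) := factor_pos h0 h2 0
    have ht : 1 - t^(0+1) = 1 - t := by norm_num
    nlinarith

variable {x : ℝ} (hx0 : 0 ≤ x)

include hx0

lemma gg_nonneg (m : ℕ) : 0 ≤ gg t x m :=
  Finset.prod_nonneg fun j _ => div_nonneg (by positivity) (factor_pos h0 h2 j).le

lemma gg_le (m : ℕ) : gg t x m ≤ 4 * x^m := by
  have hP := Pd_lb h0 h2 m
  have hPpos : (0:ℝ) < ∏ j ∈ range m, (1 - t^(j+1)) := by linarith
  have hnum : ∏ j ∈ range m, (x * t^j) ≤ x^m := by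
    calc ∏ j ∈ range m, (x * t^j) ≤ ∏ j ∈ range m, x :=
          Finset.prod_le_prod (fun j _ => by positivity)
            (fun j _ => by
              have h1 : t^j ≤ 1 := pow_le_one₀ h0.le (by linarith)
              nlinarith)
      _ = x^m := by rw [Finset.prod_const, Finset.card_range]
  have hgg : gg t x m = (∏ j ∈ range m, (x * t^j)) / (∏ j ∈ range m, (1 - t^(j+1))) := by
    rw [gg, ← Finset.prod_div_distrib]
  rw [hgg]
  have hnn : 0 ≤ ∏ j ∈ range m, (x * t^j) := Finset.prod_nonneg fun j _ => by positivity
  calc (∏ j ∈ range m, (x * t^j)) / (∏ j ∈ range m, (1 - t^(j+1)))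
      ≤ (∏ j ∈ range m, (x * t^j)) / (1/4) := by
        apply div_le_div_of_nonneg_left hnn ?_ hP
        norm_num
    _ = 4 * ∏ j ∈ range m, (x * t^j) := by ring
    _ ≤ 4 * x^m := by linarith

variable (hx2 : x ≤ 1/2)
include hx2

lemma summable_gg : Summable (gg t x) := by
  refine Summable.of_nonneg_of_le (gg_nonneg h0 h2 hx0) (gg_le h0 h2 hx0) ?_
  exact (summable_geometric_of_lt_one hx0 (by linarith)).mul_left 4

lemma one_le_EE : 1 ≤ ∑' m, gg t x m := by
  have := Summable.le_tsum (summable_gg h0 h2 hx0 hx2) 0 (fun j _ => gg_nonneg h0 h2 hx0 j)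
  rwa [gg_zero] at this

lemma EE_le : ∑' m, gg t x m ≤ 1 + 8 * x := by
  rw [Summable.tsum_eq_zero_add (summable_gg h0 h2 hx0 hx2), gg_zero]
  have hs1 : Summable (fun m => gg t x (m+1)) :=
    (summable_nat_add_iff 1).2 (summable_gg h0 h2 hx0 hx2)
  have hs2 : Summable (fun m : ℕ => (4*x) * x^m) :=
    (summable_geometric_of_lt_one hx0 (by linarith)).mul_left (4*x)
  have hle : ∑' m, gg t x (m+1) ≤ ∑' m : ℕ, (4*x) * x^m := by
    refine Summable.tsum_le_tsum (fun m => ?_) hs1 hs2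
    calc gg t x (m+1) ≤ 4 * x^(m+1) := gg_le h0 h2 hx0 (m+1)
      _ = (4*x) * x^m := by ring
  have hgeo : ∑' m : ℕ, (4*x) * x^m = (4*x) * (1-x)⁻¹ := by
    rw [tsum_mul_left, tsum_geometric_of_lt_one hx0 (by linarith)]
  have hinv : (1-x)⁻¹ ≤ 2 := by
    rw [inv_le_comm₀ (by linarith) (by norm_num)]
    linarith
  have : (4*x) * (1-x)⁻¹ ≤ 8 * x := by nlinarith
  linarith [hle, hgeo ▸ this]

omit hx0 hx2

lemma gg_mul (m : ℕ) : gg t (t*x) m = t^m * gg t x m := by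
  calc ∏ j ∈ range m, (t*x * t^j / (1 - t^(j+1)))
      = ∏ j ∈ range m, (t * (x * t^j / (1 - t^(j+1)))) :=
        Finset.prod_congr rfl fun j _ => by ring
    _ = (∏ _j ∈ range m, t) * ∏ j ∈ range m, (x * t^j / (1 - t^(j+1))) :=
        Finset.prod_mul_distrib
    _ = t^m * gg t x m := by rw [Finset.prod_const, Finset.card_range, gg]

lemma gg_succ (m : ℕ) : gg t x (m+1) = gg t (t*x) (m+1) + x * gg t (t*x) m := by
  have hne : (1 - t^(m+1)) ≠ 0 := (factor_pos h0 h2 m).ne'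
  rw [gg_mul h0 h2, gg_mul h0 h2]
  have hx1 : gg t x (m+1) = gg t x m * (x * t^m / (1 - t^(m+1))) := Finset.prod_range_succ _ m
  rw [hx1]
  field_simp
  ring

include hx0 hx2

lemma EE_funeq : ∑' m, gg t x m = (1+x) * ∑' m, gg t (t*x) m := by
  have htx0 : 0 ≤ t*x := by positivity
  have htx2 : t*x ≤ 1/2 := by nlinarith
  have s1 : Summable (gg t (t*x)) := summable_gg h0 h2 htx0 htx2
  have s2 : Summable (fun m => gg t (t*x) (m+1)) := (summable_nat_add_iff 1).2 s1
  calc ∑' m, gg t x m = gg t x 0 + ∑' m, gg t x (m+1) :=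
        Summable.tsum_eq_zero_add (summable_gg h0 h2 hx0 hx2)
    _ = 1 + ∑' m, (gg t (t*x) (m+1) + x * gg t (t*x) m) := by
        rw [gg_zero]; congr 1; exact tsum_congr fun m => gg_succ h0 h2 m
    _ = 1 + ((∑' m, gg t (t*x) (m+1)) + ∑' m, x * gg t (t*x) m) := by
        rw [Summable.tsum_add s2 (s1.mul_left x)]
    _ = 1 + ((∑' m, gg t (t*x) (m+1)) + x * ∑' m, gg t (t*x) m) := by rw [tsum_mul_left]
    _ = (1+x) * ∑' m, gg t (t*x) m := by
        have := Summable.tsum_eq_zero_add s1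
        rw [gg_zero] at this
        rw [show ∑' m, gg t (t*x) (m+1) = (∑' m, gg t (t*x) m) - 1 by linarith]
        ring

omit hx0 hx2

lemma EE_iter (n : ℕ) :
    ∑' m, gg t t m = (∏ j ∈ range n, (1 + t^(j+1))) * ∑' m, gg t (t^(n+1)) m := by
  induction n with
  | zero => simp [pow_one]
  | succ n ih =>
    rw [ih, Finset.prod_range_succ]
    have h1 : ∑' m, gg t (t^(n+1)) m = (1 + t^(n+1)) * ∑' m, gg t (t*t^(n+1)) m :=
      EE_funeq h0 h2 (by positivity) (pow_le h0 h2 n)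
    rw [h1, show t*t^(n+1) = t^(n+1+1) from (pow_succ' t (n+1)).symm]
    ring

end T

end Stmt19Aux

open Stmt19Aux in
/-- Euler-type partition identity: for an integer `q ≥ 2`, the series
`∑_{m≥0} 1/∏_{j=1}^m (q^j - 1)` converges and
`∏_{i≥0} (1 - q^{-(2i+1)}) · ∑_{m≥0} 1/∏_{j=1}^m (q^j - 1) = 1`. -/
theorem stmt_19 (q : ℕ) (hq : 2 ≤ q) :
    Summable (fun m : ℕ => (∏ j ∈ Finset.range m, ((q : ℝ) ^ (j + 1) - 1))⁻¹) ∧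
      (∏' i : ℕ, (1 - ((q : ℝ) ^ (2 * i + 1))⁻¹)) *
        (∑' m : ℕ, (∏ j ∈ Finset.range m, ((q : ℝ) ^ (j + 1) - 1))⁻¹) = 1 := by
  have hq2 : (2:ℝ) ≤ (q:ℝ) := by exact_mod_cast hq
  have hqpos : (0:ℝ) < q := by linarith
  obtain ⟨t, ht_def, h0, h2⟩ : ∃ t : ℝ, t = (q:ℝ)⁻¹ ∧ 0 < t ∧ t ≤ 1/2 :=
    ⟨(q:ℝ)⁻¹, rfl, by positivity, by rw [inv_le_comm₀ hqpos (by norm_num)]; linarith⟩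
  have hqne : (q:ℝ) ≠ 0 := hqpos.ne'
  -- term identification
  have hterm : ∀ m : ℕ, (∏ j ∈ Finset.range m, ((q : ℝ) ^ (j + 1) - 1))⁻¹ = gg t t m := by
    intro m
    rw [gg, ← Finset.prod_inv_distrib]
    refine Finset.prod_congr rfl fun j _ => ?_
    have hne : ((q:ℝ)^(j+1) - 1) ≠ 0 := by
      have : (1:ℝ) < (q:ℝ)^(j+1) := one_lt_pow₀ (by linarith) (Nat.succ_ne_zero j)
      linarith
    have hQ1 : (1:ℝ) < (q:ℝ)^(j+1) := one_lt_pow₀ (by linarith) (Nat.succ_ne_zero j)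
    have hQ0 : ((q:ℝ)^(j+1)) ≠ 0 := by positivity
    have hfne : (1 - ((q:ℝ)^(j+1))⁻¹) ≠ 0 := by
      have h1 : ((q:ℝ)^(j+1))⁻¹ < 1 := by
        rw [inv_lt_one_iff₀]; right; exact hQ1
      linarith
    rw [show t*t^j = t^(j+1) from (pow_succ' t j).symm, ht_def, inv_pow]
    rw [eq_div_iff hfne, inv_mul_eq_div, div_eq_iff hne]
    field_simp
  -- summability
  have hsum : Summable (gg t t) := summable_gg h0 h2 h0.le h2
  refine ⟨by rw [show (fun m : ℕ => (∏ j ∈ Finset.range m, ((q : ℝ) ^ (j + 1) - 1))⁻¹) = gg t t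
      from funext hterm]; exact hsum, ?_⟩
  -- multipliability
  have hsummt : Summable (fun j : ℕ => t^(j+1)) := (summable_nat_add_iff 1).2
    (summable_geometric_of_lt_one h0.le (by linarith))
  have habs : ∀ (a : ℕ → ℝ), (∀ n, |a n| ≤ 1/2) → Summable a → Multipliable (fun n => 1 + a n) :=
    fun a ha hs => mult_one_add_of ha hs
  have hmB : Multipliable (fun j : ℕ => 1 + t^(j+1)) :=
    habs _ (fun n => by rw [abs_of_nonneg (by positivity)]; exact pow_le h0 h2 n) hsummt
  have hmC : Multipliable (fun j : ℕ => 1 - t^(j+1)) := by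
    have := habs (fun j => -(t^(j+1)))
      (fun n => by rw [abs_neg, abs_of_nonneg (by positivity)]; exact pow_le h0 h2 n) hsummt.neg
    simpa [sub_eq_add_neg] using this
  have ht2 : t^2 < 1 := by nlinarith
  have hgeo2 : Summable (fun i : ℕ => (t^2)^i) :=
    summable_geometric_of_lt_one (by positivity) ht2
  have hsA : Summable (fun i : ℕ => t^(2*i+1)) := by
    have := hgeo2.mul_left t
    refine this.congr fun i => ?_
    rw [← pow_mul, ← pow_succ']
  have hsD : Summable (fun i : ℕ => t^(2*i+2)) := by
    have := hgeo2.mul_left (t^2)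
    refine this.congr fun i => ?_
    rw [← pow_mul, ← pow_add]
    ring_nf
  have hpowle : ∀ k : ℕ, 1 ≤ k → t^k ≤ 1/2 := by
    intro k hk
    obtain ⟨m, rfl⟩ := Nat.exists_eq_add_of_le hk
    rw [show 1 + m = m + 1 by omega]
    exact pow_le h0 h2 m
  have hmA : Multipliable (fun i : ℕ => 1 - t^(2*i+1)) := by
    have := mult_one_add_of (a := fun i => -(t^(2*i+1)))
      (fun n => by rw [abs_neg, abs_of_nonneg (by positivity)]; exact hpowle _ (by omega)) hsA.neg
    simpa [sub_eq_add_neg] using this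
  have hmD : Multipliable (fun i : ℕ => 1 - t^(2*i+2)) := by
    have := mult_one_add_of (a := fun i => -(t^(2*i+2)))
      (fun n => by rw [abs_neg, abs_of_nonneg (by positivity)]; exact hpowle _ (by omega)) hsD.neg
    simpa [sub_eq_add_neg] using this
  -- the tsum equals B
  obtain ⟨B, hB_def⟩ : ∃ B : ℝ, B = ∏' j : ℕ, (1 + t^(j+1)) := ⟨_, rfl⟩
  have hEB : ∑' m, gg t t m = B := by
    have hpart : Tendsto (fun n => ∏ j ∈ range n, (1 + t^(j+1))) atTop (nhds B) := by
      rw [hB_def]; exact hmB.hasProd.tendsto_prod_nat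
    have htail : Tendsto (fun n : ℕ => ∑' m, gg t (t^(n+1)) m) atTop (nhds 1) := by
      have hp : Tendsto (fun n : ℕ => t^(n+1)) atTop (nhds 0) := by
        have := tendsto_pow_atTop_nhds_zero_of_lt_one h0.le (by linarith : t < 1)
        exact this.comp (tendsto_add_atTop_nat 1)
      have hup : Tendsto (fun n : ℕ => 1 + 8 * t^(n+1)) atTop (nhds 1) := by
        have := ((hp.const_mul 8).const_add 1)
        simpa using this
      refine tendsto_of_tendsto_of_tendsto_of_le_of_le tendsto_const_nhds hup ?_ ?_
      · intro n; exact one_le_EE h0 h2 (by positivity) (pow_le h0 h2 n)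
      · intro n; exact EE_le h0 h2 (by positivity) (pow_le h0 h2 n)
    have hcomb : Tendsto (fun n : ℕ =>
        (∏ j ∈ range n, (1 + t^(j+1))) * ∑' m, gg t (t^(n+1)) m) atTop (nhds (B * 1)) :=
      hpart.mul htail
    have hconst : (fun n : ℕ =>
        (∏ j ∈ range n, (1 + t^(j+1))) * ∑' m, gg t (t^(n+1)) m) = fun _ => ∑' m, gg t t m := by
      funext n; exact (EE_iter h0 h2 n).symm
    rw [hconst] at hcomb
    have := tendsto_nhds_unique tendsto_const_nhds hcomb
    rw [this, mul_one]
  -- product identities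
  obtain ⟨A, hA_def⟩ : ∃ A : ℝ, A = ∏' i : ℕ, (1 - t^(2*i+1)) := ⟨_, rfl⟩
  obtain ⟨C, hC_def⟩ : ∃ C : ℝ, C = ∏' j : ℕ, (1 - t^(j+1)) := ⟨_, rfl⟩
  obtain ⟨D, hD_def⟩ : ∃ D : ℝ, D = ∏' i : ℕ, (1 - t^(2*i+2)) := ⟨_, rfl⟩
  have hBC : B * C = D := by
    rw [hB_def, hC_def, hD_def, ← Multipliable.tprod_mul hmB hmC]
    exact tprod_congr fun j => by ring
  have hAD : A * D = C := by
    have key := tprod_even_mul_odd (f := fun j : ℕ => 1 - t^(j+1))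
      (by exact hmA) (by exact hmD)
    rw [hA_def, hD_def, hC_def]
    simpa using key
  have hDpos : (0:ℝ) < D := by
    have hlb : ∀ n, (1:ℝ)/2 ≤ ∏ i ∈ range n, (1 - t^(2*i+2)) := by
      intro n
      have hA1 : 1 - ∑ i ∈ range n, t^(2*i+2) ≤ ∏ i ∈ range n, (1 - t^(2*i+2)) :=
        one_sub_sum_le_prod (fun i => by positivity)
          (fun i => by have := pow_le h0 h2 (2*i+1);
                       rw [show 2*i+1+1 = 2*i+2 from rfl] at this; linarith) n
      have hcmp : ∑ i ∈ range n, t^(2*i+2) ≤ ∑ i ∈ range n, t^(i+2) := by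
        refine Finset.sum_le_sum fun i _ => ?_
        exact pow_le_pow_of_le_one h0.le (by linarith) (by omega)
      have := sum_pow_le h0 h2 n
      linarith
    have htend : Tendsto (fun n => ∏ i ∈ range n, (1 - t^(2*i+2))) atTop (nhds D) := by
      rw [hD_def]; exact hmD.hasProd.tendsto_prod_nat
    have hge : 1/2 ≤ D := ge_of_tendsto' htend hlb
    linarith
  -- conclude
  have hfinal : A * B = 1 := by
    have h1 : (A * B) * D = 1 * D := by
      calc (A * B) * D = B * (A * D) := by ring
        _ = B * C := by rw [hAD]
        _ = D := hBC
        _ = 1 * D := (one_mul D).symm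
    exact mul_right_cancel₀ hDpos.ne' h1
  have htsum : (∑' m : ℕ, (∏ j ∈ Finset.range m, ((q : ℝ) ^ (j + 1) - 1))⁻¹) = B := by
    rw [tsum_congr hterm]; exact hEB
  have hAq : (∏' i : ℕ, (1 - ((q : ℝ) ^ (2 * i + 1))⁻¹)) = A := by
    rw [hA_def]
    refine tprod_congr fun i => ?_
    rw [ht_def, inv_pow]
  rw [htsum, hAq, hfinal]
end
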